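/- Let L be a residuated lattice and let H be a convex subalgebra of L. Then H is normal if and only if for all x ∈ H and u ∈ L, both ((x\u)\u) ∧ e ∈ H and (u/(u/x)) ∧ e ∈ H. -/

import Mathlib

universe u

/-- A residuated lattice: a lattice-ordered monoid with left and right residuals.
`ldiv x z` is `x \ z` and `rdiv z y` is `z / y`. -/
class ResiduatedLattice (α : Type u) extends Lattice α, Monoid α where
  ldiv : α → α → α
  rdiv : α → α → α
  mul_le_iff_le_ldiv : ∀ x y z : α, x * y ≤ z ↔ y ≤ ldiv x z
  mul_le_iff_le_rdiv : ∀ x y z : α, x * y ≤ z ↔ x ≤ rdiv z y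

namespace ResiduatedLattice

variable {α : Type u} [ResiduatedLattice α]

/-- `L` is e-cyclic if `x \ e = e / x` for all `x`. -/
def ECyclic (α : Type u) [ResiduatedLattice α] : Prop :=
  ∀ x : α, ldiv x 1 = rdiv 1 x

/-- Absolute value: `|x| = x ⊓ (e / x) ⊓ e`. -/
def absv (x : α) : α := x ⊓ rdiv 1 x ⊓ 1

/-- A convex subalgebra: contains `e`, closed under all the operations, and order-convex. -/
structure IsConvexSubalgebra (H : Set α) : Prop where
  one_mem : (1 : α) ∈ H
  mul_mem : ∀ ⦃x⦄, x ∈ H → ∀ ⦃y⦄, y ∈ H → x * y ∈ H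
  sup_mem : ∀ ⦃x⦄, x ∈ H → ∀ ⦃y⦄, y ∈ H → x ⊔ y ∈ H
  inf_mem : ∀ ⦃x⦄, x ∈ H → ∀ ⦃y⦄, y ∈ H → x ⊓ y ∈ H
  ldiv_mem : ∀ ⦃x⦄, x ∈ H → ∀ ⦃y⦄, y ∈ H → ldiv x y ∈ H
  rdiv_mem : ∀ ⦃x⦄, x ∈ H → ∀ ⦃y⦄, y ∈ H → rdiv x y ∈ H
  convex : ∀ ⦃a⦄, a ∈ H → ∀ ⦃b⦄, b ∈ H → ∀ ⦃x⦄, a ≤ x → x ≤ b → x ∈ H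

/-- `C[S]`: the smallest convex subalgebra containing `S`. -/
def convexClosure (S : Set α) : Set α :=
  ⋂₀ {H : Set α | IsConvexSubalgebra H ∧ S ⊆ H}

end ResiduatedLattice

open ResiduatedLattice

/-- A convex subalgebra is normal if it is closed under conjugation. -/
def IsNormal {α : Type u} [ResiduatedLattice α] (H : Set α) : Prop :=
  ∀ x ∈ H, ∀ y : α, ldiv y (x * y) ⊓ 1 ∈ H ∧ rdiv (y * x) y ⊓ 1 ∈ H

/-! Each kind of conjugate of `x` lies below a conjugate of the other kind: `x (x\u) ≤ u` gives
`(x\u)\(x (x\u)) ≤ (x\u)\u`, and `y ≤ x\(xy)` gives `(x\(xy))\(xy) ≤ y\(xy)` (dually for `/`).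
After meeting with `e`, convexity between the smaller element and `e ∈ H` puts the larger one in `H`. -/

namespace ResiduatedLattice

variable {α : Type u} [ResiduatedLattice α]

lemma mul_ldiv_le (x z : α) : x * ldiv x z ≤ z :=
  (mul_le_iff_le_ldiv _ _ _).mpr le_rfl

lemma rdiv_mul_le (z y : α) : rdiv z y * y ≤ z :=
  (mul_le_iff_le_rdiv _ _ _).mpr le_rfl

lemma le_ldiv_mul (x y : α) : y ≤ ldiv x (x * y) :=
  (mul_le_iff_le_ldiv _ _ _).mp le_rfl

lemma le_rdiv_mul (x y : α) : x ≤ rdiv (x * y) y :=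
  (mul_le_iff_le_rdiv _ _ _).mp le_rfl

instance : MulLeftMono α :=
  ⟨fun c _ b h => (mul_le_iff_le_ldiv _ _ _).mpr (h.trans (le_ldiv_mul c b))⟩

instance : MulRightMono α :=
  ⟨fun c _ b h => (mul_le_iff_le_rdiv _ _ _).mpr (h.trans (le_rdiv_mul b c))⟩

lemma ldiv_le_ldiv_left {a b : α} (h : a ≤ b) (c : α) : ldiv c a ≤ ldiv c b :=
  (mul_le_iff_le_ldiv _ _ _).mp ((mul_ldiv_le c a).trans h)

lemma ldiv_le_ldiv_right {a b : α} (h : a ≤ b) (c : α) : ldiv b c ≤ ldiv a c :=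
  (mul_le_iff_le_ldiv _ _ _).mp ((mul_le_mul_left h _).trans (mul_ldiv_le b c))

lemma rdiv_le_rdiv_left {a b : α} (h : a ≤ b) (c : α) : rdiv a c ≤ rdiv b c :=
  (mul_le_iff_le_rdiv _ _ _).mp ((rdiv_mul_le a c).trans h)

lemma rdiv_le_rdiv_right {a b : α} (h : a ≤ b) (c : α) : rdiv c b ≤ rdiv c a :=
  (mul_le_iff_le_rdiv _ _ _).mp ((mul_le_mul_right h _).trans (rdiv_mul_le c b))

lemma IsConvexSubalgebra.inf_one_mem_of_le {H : Set α} (hH : IsConvexSubalgebra H) {a b : α}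
    (ha : a ⊓ 1 ∈ H) (hab : a ≤ b) : b ⊓ 1 ∈ H :=
  hH.convex ha hH.one_mem (inf_le_inf_right 1 hab) inf_le_right

end ResiduatedLattice

/-- a convex subalgebra is normal iff it is closed under the
`*`-conjugations `λ*_u(x) = ((x\u)\u) ⊓ e` and `ρ*_u(x) = (u/(u/x)) ⊓ e`. -/
theorem stmt17 {α : Type u} [ResiduatedLattice α]
    (H : Set α) (hH : IsConvexSubalgebra H) :
    IsNormal H ↔
      ∀ x ∈ H, ∀ u : α, ldiv (ldiv x u) u ⊓ 1 ∈ H ∧ rdiv u (rdiv u x) ⊓ 1 ∈ H := by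
  constructor
  · intro hN x hx u
    exact ⟨hH.inf_one_mem_of_le (hN x hx (ldiv x u)).1 (ldiv_le_ldiv_left (mul_ldiv_le x u) _),
      hH.inf_one_mem_of_le (hN x hx (rdiv u x)).2 (rdiv_le_rdiv_left (rdiv_mul_le u x) _)⟩
  · intro hS x hx y
    exact ⟨hH.inf_one_mem_of_le (hS x hx (x * y)).1 (ldiv_le_ldiv_right (le_ldiv_mul x y) _),
      hH.inf_one_mem_of_le (hS x hx (y * x)).2 (rdiv_le_rdiv_right (le_rdiv_mul y x) _)⟩
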